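/- (Proposition 1) For a finely layered medium of n isotropic layers satisfying the strict stability conditions, the Backus conditions M = L, S = M·T and T = M·R hold if and only if c1212 = c2323, c1111 = c3333 and c1133 = c1111 − 2·c1212. -/

import Mathlib

open Filter Real

noncomputable section

/-- Arithmetic average of `n` values (equal layer thickness). -/
def avgN (n : ℕ) (f : Fin n → ℝ) : ℝ := (∑ i, f i) / n

/-- Backus-average coefficient c1111 of `n` isotropic layers. -/
def c1111N (n : ℕ) (lam mu : Fin n → ℝ) : ℝ :=
  (avgN n (fun i => lam i / (lam i + 2 * mu i))) ^ 2
      * (avgN n (fun i => 1 / (lam i + 2 * mu i)))⁻¹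
    + avgN n (fun i => 4 * (lam i + mu i) * mu i / (lam i + 2 * mu i))

/-- Backus-average coefficient c1122 of `n` isotropic layers. -/
def c1122N (n : ℕ) (lam mu : Fin n → ℝ) : ℝ :=
  (avgN n (fun i => lam i / (lam i + 2 * mu i))) ^ 2
      * (avgN n (fun i => 1 / (lam i + 2 * mu i)))⁻¹
    + avgN n (fun i => 2 * lam i * mu i / (lam i + 2 * mu i))

/-- Backus-average coefficient c1133 of `n` isotropic layers. -/
def c1133N (n : ℕ) (lam mu : Fin n → ℝ) : ℝ :=
  avgN n (fun i => lam i / (lam i + 2 * mu i))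
    * (avgN n (fun i => 1 / (lam i + 2 * mu i)))⁻¹

/-- Backus-average coefficient c3333 of `n` isotropic layers. -/
def c3333N (n : ℕ) (lam mu : Fin n → ℝ) : ℝ :=
  (avgN n (fun i => 1 / (lam i + 2 * mu i)))⁻¹

/-- Backus-average coefficient c2323 of `n` isotropic layers. -/
def c2323N (n : ℕ) (mu : Fin n → ℝ) : ℝ := (avgN n (fun i => 1 / mu i))⁻¹

/-- Backus-average coefficient c1212 of `n` isotropic layers. -/
def c1212N (n : ℕ) (mu : Fin n → ℝ) : ℝ := avgN n mu

end

/-!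
Write `R = ⟨1/(λ+2μ)⟩`, `S = ⟨μ²/(λ+2μ)⟩`, `T = ⟨μ/(λ+2μ)⟩`, `M = ⟨μ⟩`. Since
`λ/(λ+2μ) = 1 - 2μ/(λ+2μ)`, the coefficients become `c3333 = 1/R`, `c1133 = (1-2T)/R` and
`c1111 = (1-2T)²/R + 4(M-S)`. Multiplied by `R`, the conditions `c1111 = c3333` and
`c1133 = c1111 - 2 c1212` read `E₁ : T² - T + (M-S)R = 0` and `E₂ : T - 2T² - (M-2S)R = 0`.
Now `2E₁ + E₂` is `T = MR`, and `E₁ + E₂` is `SR = T²`, which given `T = MR` and `R > 0`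
is `S = MT`.
-/

open Finset
open scoped BigOperators

lemma avgN_eq_expect (n : ℕ) (f : Fin n → ℝ) : avgN n f = 𝔼 i, f i := by
  rw [Fintype.expect_eq_sum_div_card, Fintype.card_fin, avgN]

/-- Backus's `R`; his `L` and `M` are `c2323N` and `c1212N`. -/
noncomputable def backusR (n : ℕ) (lam mu : Fin n → ℝ) : ℝ :=
  avgN n (fun i => 1 / (lam i + 2 * mu i))

noncomputable def backusS (n : ℕ) (lam mu : Fin n → ℝ) : ℝ :=
  avgN n (fun i => mu i / (lam i + 2 * mu i) * mu i)

noncomputable def backusT (n : ℕ) (lam mu : Fin n → ℝ) : ℝ :=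
  avgN n (fun i => mu i / (lam i + 2 * mu i))

section Layers

variable {n : ℕ} {lam mu : Fin n → ℝ}

lemma backusR_pos [NeZero n] (hlm : ∀ i, 0 < lam i + 2 * mu i) : 0 < backusR n lam mu := by
  rw [backusR, avgN_eq_expect]
  exact expect_pos (fun i _ => one_div_pos.mpr (hlm i)) univ_nonempty

lemma avgN_div_mul_one_div_eq_backusR (hmu : ∀ i, mu i ≠ 0) :
    avgN n (fun i => mu i / (lam i + 2 * mu i) * (1 / mu i)) = backusR n lam mu := by
  unfold backusR
  congr with i
  field_simp [hmu i]

lemma avgN_lam_div [NeZero n] (hlm : ∀ i, lam i + 2 * mu i ≠ 0) :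
    avgN n (fun i => lam i / (lam i + 2 * mu i)) = 1 - 2 * backusT n lam mu := by
  have h : ∀ i, lam i / (lam i + 2 * mu i) = 1 - 2 * (mu i / (lam i + 2 * mu i)) := fun i => by
    field_simp [hlm i]; ring
  simp only [backusT, avgN_eq_expect, h, expect_sub_distrib, Fintype.expect_const, ← mul_expect]

lemma avgN_four_mul_div (hlm : ∀ i, lam i + 2 * mu i ≠ 0) :
    avgN n (fun i => 4 * (lam i + mu i) * mu i / (lam i + 2 * mu i))
      = 4 * (c1212N n mu - backusS n lam mu) := by
  have h : ∀ i, 4 * (lam i + mu i) * mu i / (lam i + 2 * mu i)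
      = 4 * (mu i - mu i / (lam i + 2 * mu i) * mu i) := fun i => by
    rw [eq_comm, div_mul_eq_mul_div, sub_div' (hlm i), mul_div_assoc']
    congr 1
    ring
  simp only [c1212N, backusS, avgN_eq_expect, h, expect_sub_distrib, ← mul_expect]

lemma c1111N_eq [NeZero n] (hlm : ∀ i, lam i + 2 * mu i ≠ 0) :
    c1111N n lam mu = (1 - 2 * backusT n lam mu) ^ 2 * (backusR n lam mu)⁻¹
      + 4 * (c1212N n mu - backusS n lam mu) := by
  rw [c1111N, avgN_lam_div hlm, avgN_four_mul_div hlm, backusR]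

lemma c1133N_eq [NeZero n] (hlm : ∀ i, lam i + 2 * mu i ≠ 0) :
    c1133N n lam mu = (1 - 2 * backusT n lam mu) * (backusR n lam mu)⁻¹ := by
  rw [c1133N, avgN_lam_div hlm, backusR]

end Layers

lemma backus_relations_iff {R T M S : ℝ} (hR : R ≠ 0) :
    (S = M * T ∧ T = M * R) ↔
      ((1 - 2 * T) ^ 2 * R⁻¹ + 4 * (M - S) = R⁻¹ ∧
        (1 - 2 * T) * R⁻¹ = (1 - 2 * T) ^ 2 * R⁻¹ + 4 * (M - S) - 2 * M) := by
  field_simp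
  constructor
  · rintro ⟨rfl, rfl⟩
    constructor <;> ring
  · rintro ⟨h₁, h₂⟩
    have hT : T = M * R := by linear_combination -(h₁ + h₂) / 2
    have hS : S * R = M * T * R := by linear_combination h₁ / 4 + h₂ / 2 + T * hT
    exact ⟨mul_right_cancel₀ hR hS, hT⟩

/-- Proposition 1: For n isotropic layers satisfying the strict
stability conditions, the Backus conditions M = L, S = M·T and T = M·R hold
iff c1212 = c2323, c1111 = c3333 and c1133 = c1111 − 2·c1212. -/
theorem stmt6 (n : ℕ) (hn : 1 ≤ n) (lam mu : Fin n → ℝ)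
    (hmu : ∀ i, 0 < mu i) (hlm : ∀ i, 0 < lam i + 2 * mu i) :
    (c1212N n mu = c2323N n mu ∧
      avgN n (fun i => (mu i / (lam i + 2 * mu i)) * mu i)
        = c1212N n mu * avgN n (fun i => mu i / (lam i + 2 * mu i)) ∧
      avgN n (fun i => mu i / (lam i + 2 * mu i))
        = c1212N n mu * avgN n (fun i => (mu i / (lam i + 2 * mu i)) * (1 / mu i)))
    ↔
    (c1212N n mu = c2323N n mu ∧
      c1111N n lam mu = c3333N n lam mu ∧
      c1133N n lam mu = c1111N n lam mu - 2 * c1212N n mu) := by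
  have : NeZero n := ⟨by omega⟩
  have hd : ∀ i, lam i + 2 * mu i ≠ 0 := fun i => (hlm i).ne'
  rw [avgN_div_mul_one_div_eq_backusR fun i => (hmu i).ne', c1111N_eq hd, c1133N_eq hd]
  exact and_congr_right fun _ => backus_relations_iff (backusR_pos hlm).ne'
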